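/- arXiv:2501.02606 — 5 statements merged into one kernel-verified Lean document; each statement's English description precedes it below -/
import Mathlib

section
/- If a semigroup {T_s}_{s≥0} of Dunford–Schwartz operators on L¹(Ω,μ) is strongly continuous in L¹ (i.e., ‖T_s(f) − T_{s₀}(f)‖₁ → 0 as s → s₀ for every f ∈ L¹), then for every 1 < p < ∞ the semigroup of induced contractions on Lᵖ(Ω,μ) is strongly continuous in Lᵖ: ‖T_s(f) − T_{s₀}(f)‖_p → 0 as s → s₀ for every f ∈ Lᵖ(Ω,μ). -/
open MeasureTheory Filter Set Topology
open scoped ENNReal NNReal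

noncomputable section

/-- Almost uniform convergence (in Egorov's sense) of a family of functions along a filter:
for every `ε > 0` there is a measurable set `G` with `μ Gᶜ ≤ ε` on which the family converges
to `g` uniformly (in the essential sup norm). -/
def AUTendsto {Ω : Type*} [MeasurableSpace Ω] (μ : Measure Ω) {ι : Type*} (l : Filter ι)
    (F : ι → Ω → ℂ) (g : Ω → ℂ) : Prop :=
  ∀ ε : ℝ, 0 < ε → ∃ G : Set Ω, MeasurableSet G ∧ μ Gᶜ ≤ ENNReal.ofReal ε ∧
    Tendsto (fun i => eLpNorm (G.indicator (g - F i)) ⊤ μ) l (𝓝 0)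

/-- A semigroup `{T_s}_{s ≥ 0}` of Dunford–Schwartz operators, acting (via the canonical
extension) on `L¹ + L^∞`, which is strongly continuous in `L¹`.  The contraction property is
recorded for every exponent `1 ≤ p ≤ ∞`, as such an operator extends uniquely to a linear
contraction of every `Lᵖ`. -/
structure DSSemigroup {Ω : Type*} [MeasurableSpace Ω] (μ : Measure Ω) where
  T : ℝ → (Ω → ℂ) →ₗ[ℂ] (Ω → ℂ)
  aestronglyMeasurable : ∀ s : ℝ, 0 ≤ s → ∀ f : Ω → ℂ,
    AEStronglyMeasurable f μ → AEStronglyMeasurable (T s f) μ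
  map_zero : T 0 = LinearMap.id
  map_add : ∀ s t : ℝ, 0 ≤ s → 0 ≤ t → T (s + t) = (T s).comp (T t)
  contraction : ∀ p : ℝ≥0∞, 1 ≤ p → ∀ s : ℝ, 0 ≤ s → ∀ f : Ω → ℂ,
    eLpNorm (T s f) p μ ≤ eLpNorm f p μ
  strongContL1 : ∀ f : Ω → ℂ, MemLp f 1 μ → ∀ s₀ : ℝ, 0 ≤ s₀ →
    Tendsto (fun s => eLpNorm (T s f - T s₀ f) 1 μ) (𝓝[Ici 0] s₀) (𝓝 0)

lemma interp_aux {Ω : Type*} [MeasurableSpace Ω] {μ : Measure Ω} {h : Ω → ℂ}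
    (hm : AEStronglyMeasurable h μ) {p : ℝ≥0∞} (hp0 : p ≠ 0) (hpt : p ≠ ⊤) (hp1 : 1 ≤ p) :
    eLpNorm h p μ ≤ (eLpNorm h 1 μ * eLpNorm h ⊤ μ ^ (p.toReal - 1)) ^ (1 / p.toReal) := by
  have hptR : 0 < p.toReal := ENNReal.toReal_pos hp0 hpt
  have h1R : 1 ≤ p.toReal := by
    have := ENNReal.toReal_mono hpt hp1; simpa using this
  rw [eLpNorm_eq_lintegral_rpow_enorm_toReal hp0 hpt, eLpNorm_one_eq_lintegral_enorm,
    eLpNorm_exponent_top]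
  refine ENNReal.rpow_le_rpow ?_ (by positivity)
  calc ∫⁻ x, (‖h x‖₊ : ℝ≥0∞) ^ p.toReal ∂μ
      ≤ ∫⁻ x, (‖h x‖₊ : ℝ≥0∞) * eLpNormEssSup h μ ^ (p.toReal - 1) ∂μ := by
        refine lintegral_mono_ae ?_
        filter_upwards [ae_le_eLpNormEssSup (f := h) (μ := μ)] with x hx
        have he : (‖h x‖₊ : ℝ≥0∞) ^ p.toReal
            = (‖h x‖₊ : ℝ≥0∞) ^ (1:ℝ) * (‖h x‖₊ : ℝ≥0∞) ^ (p.toReal - 1) := by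
          rw [← ENNReal.rpow_add_of_nonneg 1 (p.toReal - 1) zero_le_one (by linarith)]
          ring_nf
        rw [he, ENNReal.rpow_one]
        exact mul_le_mul_right (ENNReal.rpow_le_rpow hx (by linarith)) _
    _ = (∫⁻ x, (‖h x‖₊ : ℝ≥0∞) ∂μ) * eLpNormEssSup h μ ^ (p.toReal - 1) :=
        lintegral_mul_const'' _ hm.enorm


/-- If a semigroup `{T_s}_{s≥0}` of Dunford–Schwartz operators is strongly
continuous in `L¹`, then for every `1 < p < ∞` the induced semigroup of contractions of
`Lᵖ(Ω,μ)` is strongly continuous in `Lᵖ`: `‖T_s f − T_{s₀} f‖_p → 0` as `s → s₀` (within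
`[0,∞)`) for every `f ∈ Lᵖ(Ω,μ)`. -/
theorem stmt1 {Ω : Type*} [MeasurableSpace Ω] (μ : Measure Ω) [SigmaFinite μ]
    (𝒯 : DSSemigroup μ) (p : ℝ≥0∞) (hp1 : 1 < p) (hp2 : p ≠ ⊤)
    (f : Ω → ℂ) (hf : MemLp f p μ) (s₀ : ℝ) (hs₀ : 0 ≤ s₀) :
    Tendsto (fun s => eLpNorm (𝒯.T s f - 𝒯.T s₀ f) p μ) (𝓝[Ici 0] s₀) (𝓝 0) := by
  have hp0 : p ≠ 0 := (zero_lt_one.trans hp1).ne'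
  have hp1' : 1 ≤ p := hp1.le
  have hptR : 0 < p.toReal := ENNReal.toReal_pos hp0 hp2
  have h1R : 1 ≤ p.toReal := by
    have := ENNReal.toReal_mono hp2 hp1'; simpa using this
  set l := 𝓝[Ici (0:ℝ)] s₀ with hl
  -- Step 1: the result for functions in L¹ ∩ L^∞
  have key : ∀ g : Ω → ℂ, MemLp g 1 μ → MemLp g ⊤ μ →
      Tendsto (fun s => eLpNorm (𝒯.T s g - 𝒯.T s₀ g) p μ) l (𝓝 0) := by
    intro g hg1 hgtop
    set M := eLpNorm g ⊤ μ with hM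
    have hMne : M ≠ ⊤ := hgtop.2.ne
    set C := (2 * M) ^ (p.toReal - 1) with hC
    have hCne : C ≠ ⊤ :=
      ENNReal.rpow_ne_top_of_nonneg (by linarith) (by finiteness)
    have hmeas : ∀ s : ℝ, 0 ≤ s → AEStronglyMeasurable (𝒯.T s g) μ := fun s hs =>
      𝒯.aestronglyMeasurable s hs g hg1.aestronglyMeasurable
    have hbound : ∀ s : ℝ, 0 ≤ s →
        eLpNorm (𝒯.T s g - 𝒯.T s₀ g) p μ
          ≤ (eLpNorm (𝒯.T s g - 𝒯.T s₀ g) 1 μ * C) ^ (1 / p.toReal) := by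
      intro s hs
      refine (interp_aux ((hmeas s hs).sub (hmeas s₀ hs₀)) hp0 hp2 hp1').trans ?_
      have htop : eLpNorm (𝒯.T s g - 𝒯.T s₀ g) ⊤ μ ≤ 2 * M := by
        refine (eLpNorm_sub_le (hmeas s hs) (hmeas s₀ hs₀) le_top).trans ?_
        rw [two_mul]
        exact add_le_add (𝒯.contraction ⊤ le_top s hs g) (𝒯.contraction ⊤ le_top s₀ hs₀ g)
      refine ENNReal.rpow_le_rpow (mul_le_mul_right ?_ _) (by positivity)
      exact ENNReal.rpow_le_rpow htop (by linarith)
    have h0 : Tendsto (fun s => eLpNorm (𝒯.T s g - 𝒯.T s₀ g) 1 μ) l (𝓝 0) :=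
      𝒯.strongContL1 g hg1 s₀ hs₀
    have h2 : Tendsto (fun s =>
        (eLpNorm (𝒯.T s g - 𝒯.T s₀ g) 1 μ * C) ^ (1 / p.toReal)) l (𝓝 0) := by
      have hmul := ENNReal.Tendsto.mul_const h0 (Or.inr hCne)
      rw [zero_mul] at hmul
      have hcont := (ENNReal.continuous_rpow_const (y := 1 / p.toReal)).tendsto 0
      have := hcont.comp hmul
      simpa [Function.comp_def, one_div, ENNReal.zero_rpow_of_pos (inv_pos.mpr hptR)]
        using this
    refine tendsto_of_tendsto_of_tendsto_of_le_of_le' tendsto_const_nhds h2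
      (Eventually.of_forall fun s => zero_le) ?_
    filter_upwards [self_mem_nhdsWithin] with s hs
    exact hbound s hs
  -- Step 2: density argument
  rw [ENNReal.tendsto_nhds_zero]
  intro ε hε
  have hε4 : (ε / 4 : ℝ≥0∞) ≠ 0 := (ENNReal.div_pos hε.ne' (by norm_num)).ne'
  obtain ⟨g, hgclose, hgp⟩ := hf.exists_simpleFunc_eLpNorm_sub_lt hp2 hε4
  have hg1 : MemLp (⇑g) 1 μ :=
    (SimpleFunc.memLp_iff one_ne_zero ENNReal.one_ne_top).2
      ((SimpleFunc.memLp_iff hp0 hp2).1 hgp)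
  have hgtop : MemLp (⇑g) ⊤ μ := g.memLp_top μ
  have hmid := key (⇑g) hg1 hgtop
  rw [ENNReal.tendsto_nhds_zero] at hmid
  have hfm : AEStronglyMeasurable f μ := hf.aestronglyMeasurable
  have hgm : AEStronglyMeasurable (⇑g) μ := hg1.aestronglyMeasurable
  filter_upwards [self_mem_nhdsWithin, hmid (ε / 2) (ENNReal.div_pos hε.ne' (by norm_num))]
    with s hs hmids
  have hmeas1 : AEStronglyMeasurable (𝒯.T s (f - ⇑g)) μ :=
    𝒯.aestronglyMeasurable s hs _ (hfm.sub hgm)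
  have hmeas2 : AEStronglyMeasurable (𝒯.T s (⇑g) - 𝒯.T s₀ (⇑g)) μ :=
    (𝒯.aestronglyMeasurable s hs _ hgm).sub (𝒯.aestronglyMeasurable s₀ hs₀ _ hgm)
  have hmeas3 : AEStronglyMeasurable (𝒯.T s₀ (⇑g - f)) μ :=
    𝒯.aestronglyMeasurable s₀ hs₀ _ (hgm.sub hfm)
  have hsplit : 𝒯.T s f - 𝒯.T s₀ f
      = 𝒯.T s (f - ⇑g) + (𝒯.T s (⇑g) - 𝒯.T s₀ (⇑g)) + 𝒯.T s₀ (⇑g - f) := by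
    simp only [map_sub]
    abel
  calc eLpNorm (𝒯.T s f - 𝒯.T s₀ f) p μ
      = eLpNorm (𝒯.T s (f - ⇑g) + (𝒯.T s (⇑g) - 𝒯.T s₀ (⇑g)) + 𝒯.T s₀ (⇑g - f)) p μ := by
        rw [hsplit]
    _ ≤ eLpNorm (𝒯.T s (f - ⇑g) + (𝒯.T s (⇑g) - 𝒯.T s₀ (⇑g))) p μ
          + eLpNorm (𝒯.T s₀ (⇑g - f)) p μ :=
        eLpNorm_add_le (hmeas1.add hmeas2) hmeas3 hp1'
    _ ≤ (eLpNorm (𝒯.T s (f - ⇑g)) p μ + eLpNorm (𝒯.T s (⇑g) - 𝒯.T s₀ (⇑g)) p μ)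
          + eLpNorm (𝒯.T s₀ (⇑g - f)) p μ :=
        add_le_add_left (eLpNorm_add_le hmeas1 hmeas2 hp1') _
    _ ≤ (ε / 4 + ε / 2) + ε / 4 := by
        refine add_le_add (add_le_add ?_ hmids) ?_
        · exact ((𝒯.contraction p hp1' s hs _).trans hgclose.le)
        · refine (𝒯.contraction p hp1' s₀ hs₀ _).trans ?_
          rw [eLpNorm_sub_comm]
          exact hgclose.le
    _ = ε := by
        have h24 : ε / 4 = ε / 2 / 2 := by
          simp only [div_eq_mul_inv, mul_assoc]
          congr 1
          rw [← ENNReal.mul_inv (by norm_num) (by norm_num)]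
          norm_num
        rw [h24, add_comm _ (ε / 2), add_assoc, ENNReal.add_halves, ENNReal.add_halves]
end
end

section
/- Let (X,‖·‖) be a Banach space and let M_t : X → L⁰(Ω,μ), t > 0, be a family of linear maps such that the maximal function M*(f) = sup_{t>0} |M_t(f)| belongs to L⁰(Ω,μ) for every f ∈ X. If M* is continuous at 0 ∈ X into the measure topology of L⁰ (i.e., for all ε > 0, δ > 0 there exists η > 0 such that ‖f‖ ≤ η implies μ{M*(f) > δ} ≤ ε), then the set X_c = {f ∈ X : the net {M_t(f)} converges almost uniformly as t → ∞} is closed in (X,‖·‖); the same holds with the net taken as t → 0. -/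
open MeasureTheory Filter Set Topology
open scoped ENNReal NNReal

noncomputable section

/-- The maximal function `M*(f) = sup_{t>0} |M_t(f)|` of a family of maps into `L⁰`. -/
def maximalFn {Ω : Type*} [MeasurableSpace Ω] {X : Type*} [NormedAddCommGroup X]
    [NormedSpace ℝ X] (M : ℝ → X →ₗ[ℝ] Ω → ℂ) (f : X) : Ω → ℝ≥0∞ :=
  fun ω => ⨆ t : {t : ℝ // 0 < t}, (‖M t f ω‖₊ : ℝ≥0∞)

lemma aux_closed {Ω : Type*} [MeasurableSpace Ω] (μ : Measure Ω)
    {X : Type*} [NormedAddCommGroup X] [NormedSpace ℝ X]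
    (M : ℝ → X →ₗ[ℝ] Ω → ℂ)
    (hmax : ∀ f : X, AEMeasurable (maximalFn M f) μ)
    (hcont : ∀ ε δ : ℝ, 0 < ε → 0 < δ → ∃ η : ℝ, 0 < η ∧ ∀ f : X, ‖f‖ ≤ η →
      μ {ω | ENNReal.ofReal δ < maximalFn M f ω} ≤ ENNReal.ofReal ε)
    (l : Filter ℝ) [l.NeBot] (hl : ∀ᶠ t in l, 0 < t) :
    IsClosed {f : X | ∃ g : Ω → ℂ, AUTendsto μ l (fun t : ℝ => M t f) g} := by
  apply isClosed_of_closure_subset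
  intro f hf
  set c : ℕ → ℝ := fun k => (1/2 : ℝ)^k with hc_def
  have hc : ∀ k, 0 < c k := fun k => by positivity
  have hcmono : ∀ ⦃j k : ℕ⦄, j ≤ k → c k ≤ c j := fun j k h =>
    pow_le_pow_of_le_one (by norm_num) (by norm_num) h
  have hc0 : Tendsto c atTop (𝓝 0) :=
    tendsto_pow_atTop_nhds_zero_of_lt_one (by norm_num) (by norm_num)
  -- choose approximants
  have hchoice : ∀ k : ℕ, ∃ (fk : X) (gk : Ω → ℂ),
      AUTendsto μ l (fun t => M t fk) gk ∧
      μ {ω | ENNReal.ofReal (c k) < maximalFn M (f - fk) ω} ≤ ENNReal.ofReal (c k) := by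
    intro k
    obtain ⟨η, hη, hηc⟩ := hcont (c k) (c k) (hc k) (hc k)
    obtain ⟨f', hf'S, hf'd⟩ := Metric.mem_closure_iff.mp hf η hη
    obtain ⟨g', hg'⟩ := hf'S
    refine ⟨f', g', hg', hηc _ ?_⟩
    rw [dist_eq_norm] at hf'd; linarith
  choose fk gk hAU hmeasE using hchoice
  -- measurable versions of the maximal functions
  have hm : ∀ k, AEMeasurable (maximalFn M (f - fk k)) μ := fun k => hmax _
  set E : ℕ → Set Ω := fun k => {ω | ENNReal.ofReal (c k) < (hm k).mk _ ω} with hE_def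
  have hEmeas : ∀ k, MeasurableSet (E k) :=
    fun k => measurableSet_lt measurable_const (hm k).measurable_mk
  have hEsmall : ∀ k, μ (E k) ≤ ENNReal.ofReal (c k) := by
    intro k
    refine le_trans (le_of_eq (measure_congr ?_)) (hmeasE k)
    filter_upwards [(hm k).ae_eq_mk] with ω hω
    show (ENNReal.ofReal (c k) < (hm k).mk _ ω) = (ENNReal.ofReal (c k) < maximalFn M (f - fk k) ω)
    rw [hω]
  -- sets of almost uniform convergence
  choose G hGm hGc hGt using fun k => hAU k (c k) (hc k)
  -- pointwise bound from the maximal function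
  have hEk : ∀ᵐ ω ∂μ, ∀ k, ω ∉ E k → ∀ t : ℝ, 0 < t →
      ‖M t f ω - M t (fk k) ω‖ ≤ c k := by
    rw [ae_all_iff]
    intro k
    filter_upwards [(hm k).ae_eq_mk] with ω heq hmem t ht
    have h1 : maximalFn M (f - fk k) ω ≤ ENNReal.ofReal (c k) := by
      rw [heq]; exact le_of_not_gt hmem
    have h2 : (‖M t (f - fk k) ω‖₊ : ℝ≥0∞) ≤ ENNReal.ofReal (c k) :=
      le_trans (le_iSup (fun s : {t : ℝ // 0 < t} => (‖M s (f - fk k) ω‖₊ : ℝ≥0∞)) ⟨t, ht⟩) h1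
    rw [← enorm_eq_nnnorm, ← ofReal_norm, ENNReal.ofReal_le_ofReal_iff (hc k).le] at h2
    have h3 : M t (f - fk k) ω = M t f ω - M t (fk k) ω := by
      rw [map_sub]; rfl
    rwa [h3] at h2
  -- eventual uniform bounds on G k
  have hb : ∀ k, ∀ᶠ t in l, ∀ᵐ ω ∂μ, ω ∈ G k → ‖gk k ω - M t (fk k) ω‖ ≤ c k := by
    intro k
    have hev : ∀ᶠ t in l,
        eLpNorm ((G k).indicator (gk k - fun ω => M t (fk k) ω)) ⊤ μ ≤ ENNReal.ofReal (c k) := by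
      have := (hGt k).eventually (Iio_mem_nhds (ENNReal.ofReal_pos.mpr (hc k)))
      exact this.mono fun t ht => le_of_lt ht
    filter_upwards [hev] with t ht
    filter_upwards [enorm_ae_le_eLpNormEssSup
      ((G k).indicator (gk k - fun ω => M t (fk k) ω)) μ] with ω hω hmem
    rw [← eLpNorm_exponent_top] at hω
    have := le_trans hω ht
    rw [← ofReal_norm, ENNReal.ofReal_le_ofReal_iff (hc k).le] at this
    rwa [Set.indicator_of_mem hmem, Pi.sub_apply] at this
  -- a.e. Cauchy estimate
  have hcau : ∀ᵐ ω ∂μ, ∀ j k : ℕ, ω ∈ G j → ω ∉ E j → ω ∈ G k → ω ∉ E k →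
      ‖gk j ω - gk k ω‖ ≤ 2 * c j + 2 * c k := by
    rw [ae_all_iff]; intro j; rw [ae_all_iff]; intro k
    obtain ⟨t, ht0, hbj, hbk⟩ := (hl.and ((hb j).and (hb k))).exists
    filter_upwards [hEk, hbj, hbk] with ω h1 h2 h3 hGj hEj hGk hEkk
    have e1 : ‖gk j ω - M t (fk j) ω‖ ≤ c j := h2 hGj
    have e2 : ‖M t (fk j) ω - M t f ω‖ ≤ c j := by
      rw [norm_sub_rev]; exact h1 j hEj t ht0
    have e3 : ‖M t f ω - M t (fk k) ω‖ ≤ c k := h1 k hEkk t ht0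
    have e4 : ‖M t (fk k) ω - gk k ω‖ ≤ c k := by rw [norm_sub_rev]; exact h3 hGk
    calc ‖gk j ω - gk k ω‖
        = ‖(gk j ω - M t (fk j) ω) + (M t (fk j) ω - M t f ω)
            + (M t f ω - M t (fk k) ω) + (M t (fk k) ω - gk k ω)‖ := by ring_nf
      _ ≤ _ := by
          refine le_trans (norm_add_le _ _) ?_
          refine le_trans (add_le_add_left (norm_add_le _ _) _) ?_
          refine le_trans (add_le_add_left (add_le_add_left (norm_add_le _ _) _) _) ?_
          linarith
  -- the sets H m
  set H : ℕ → Set Ω := fun m => ⋂ k : ℕ, (G (m + k) ∩ (E (m + k))ᶜ) with hH_def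
  have hHmeas : ∀ m, MeasurableSet (H m) :=
    fun m => MeasurableSet.iInter fun k => (hGm _).inter (hEmeas _).compl
  have hHmem : ∀ {m : ℕ} {ω : Ω}, ω ∈ H m → ∀ k, m ≤ k → ω ∈ G k ∧ ω ∉ E k := by
    intro m ω hω k hk
    obtain ⟨d, rfl⟩ := le_iff_exists_add.mp hk
    have := Set.mem_iInter.mp hω d
    exact ⟨this.1, this.2⟩
  have hHsmall : ∀ m, μ (H m)ᶜ ≤ 4 * (2⁻¹ : ℝ≥0∞) ^ m := by
    intro m
    have hofr : ∀ n : ℕ, ENNReal.ofReal (c n) = (2⁻¹ : ℝ≥0∞) ^ n := by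
      intro n
      rw [hc_def]
      rw [ENNReal.ofReal_pow (by norm_num : (0:ℝ) ≤ 1/2)]
      congr 1
      rw [show (1/2:ℝ) = (2:ℝ)⁻¹ by norm_num, ENNReal.ofReal_inv_of_pos two_pos,
        ENNReal.ofReal_ofNat]
    calc μ (H m)ᶜ = μ (⋃ k : ℕ, (G (m + k) ∩ (E (m + k))ᶜ)ᶜ) := by
          rw [hH_def]; rw [Set.compl_iInter]
      _ ≤ ∑' k : ℕ, μ ((G (m + k) ∩ (E (m + k))ᶜ)ᶜ) := measure_iUnion_le _
      _ ≤ ∑' k : ℕ, ((2⁻¹ : ℝ≥0∞) ^ (m + k) + (2⁻¹ : ℝ≥0∞) ^ (m + k)) := by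
          refine ENNReal.tsum_le_tsum fun k => ?_
          rw [Set.compl_inter, compl_compl]
          refine le_trans (measure_union_le _ _) ?_
          exact add_le_add (by rw [← hofr]; exact hGc _) (by rw [← hofr]; exact hEsmall _)
      _ = 2 * ((2⁻¹ : ℝ≥0∞) ^ m * ∑' k : ℕ, (2⁻¹ : ℝ≥0∞) ^ k) := by
          rw [ENNReal.tsum_mul_left.symm]
          rw [← ENNReal.tsum_mul_left]
          congr 1; funext k; rw [pow_add]; ring
      _ = 4 * (2⁻¹ : ℝ≥0∞) ^ m := by
          rw [ENNReal.tsum_geometric]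
          have : (1 - 2⁻¹ : ℝ≥0∞)⁻¹ = 2 := by
            rw [show (1 - 2⁻¹ : ℝ≥0∞) = 2⁻¹ by
              rw [ENNReal.sub_eq_of_eq_add (by simp)]
              rw [ENNReal.inv_two_add_inv_two]]
            simp
          rw [this]; ring
  -- the limit function
  set g : Ω → ℂ := fun ω => limUnder atTop (fun k => gk k ω) with hg_def
  have hglim : ∀ᵐ ω ∂μ, ∀ m : ℕ, ω ∈ H m →
      (∀ k, m ≤ k → ‖g ω - gk k ω‖ ≤ 2 * c k) := by
    filter_upwards [hcau] with ω hω m hm'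
    have hpair : ∀ j k, m ≤ j → m ≤ k → dist (gk j ω) (gk k ω) ≤ 2 * c j + 2 * c k := by
      intro j k hj hk
      obtain ⟨hGj, hEj⟩ := hHmem hm' j hj
      obtain ⟨hGk, hEkk⟩ := hHmem hm' k hk
      rw [dist_eq_norm]
      exact hω j k hGj hEj hGk hEkk
    -- Cauchy of shifted sequence
    have hC : CauchySeq (fun i : ℕ => gk (i + m) ω) := by
      apply cauchySeq_of_le_tendsto_0 (fun N => 4 * c (N + m))
      · intro n n' N hn hn'
        have b1 := hpair (n + m) (n' + m) (le_add_self) (le_add_self)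
        have b2 : c (n + m) ≤ c (N + m) := hcmono (by omega)
        have b3 : c (n' + m) ≤ c (N + m) := hcmono (by omega)
        linarith
      · have : Tendsto (fun N : ℕ => N + m) atTop atTop := tendsto_add_atTop_nat m
        have h4 := (hc0.comp this).const_mul (4:ℝ)
        simpa using h4
    obtain ⟨L, hL⟩ := cauchySeq_tendsto_of_complete hC
    have hL' : Tendsto (fun k => gk k ω) atTop (𝓝 L) :=
      (tendsto_add_atTop_iff_nat m).mp hL
    have hgL : g ω = L := hL'.limUnder_eq
    intro k hk
    rw [hgL, ← dist_eq_norm]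
    have hd : Tendsto (fun j => dist (gk j ω) (gk k ω)) atTop (𝓝 (dist L (gk k ω))) :=
      hL'.dist tendsto_const_nhds
    have hrhs : Tendsto (fun j => 2 * c j + 2 * c k) atTop (𝓝 (2 * 0 + 2 * c k)) :=
      ((hc0.const_mul 2).add tendsto_const_nhds)
    have := le_of_tendsto_of_tendsto hd hrhs
      (eventually_atTop.mpr ⟨m, fun j hj => hpair j k hj hk⟩)
    linarith [this]
  -- conclude
  refine ⟨g, ?_⟩
  intro ε hε
  -- choose m
  have hεpos : (0:ℝ≥0∞) < ENNReal.ofReal ε := ENNReal.ofReal_pos.mpr hε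
  have htend : Tendsto (fun m : ℕ => 4 * (2⁻¹ : ℝ≥0∞) ^ m) atTop (𝓝 0) := by
    have := ENNReal.tendsto_pow_atTop_nhds_zero_of_lt_one
      (by norm_num : (2⁻¹ : ℝ≥0∞) < 1)
    have h4 := ENNReal.Tendsto.const_mul this (Or.inr (by norm_num : (4:ℝ≥0∞) ≠ ⊤))
    simpa using h4
  obtain ⟨m, hmε⟩ := (htend.eventually (Iio_mem_nhds hεpos)).exists
  refine ⟨H m, hHmeas m, le_trans (hHsmall m) hmε.le, ?_⟩
  rw [ENNReal.tendsto_nhds_zero]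
  intro δ hδ
  -- choose k ≥ m with ofReal (4 * c k) ≤ δ
  have htk : Tendsto (fun k : ℕ => ENNReal.ofReal (4 * c k)) atTop (𝓝 0) := by
    have : Tendsto (fun k : ℕ => 4 * c k) atTop (𝓝 (4 * 0)) := hc0.const_mul 4
    rw [mul_zero] at this
    simpa [ENNReal.ofReal_zero] using (ENNReal.tendsto_ofReal this)
  obtain ⟨k, hkδ, hkm⟩ :=
    ((htk.eventually (Iio_mem_nhds (lt_of_lt_of_le hδ le_rfl))).and (eventually_ge_atTop m)).exists
  refine ((hl.and (hb k)).mono ?_)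
  rintro t ⟨ht0, htb⟩
  refine le_trans ?_ hkδ.le
  rw [eLpNorm_exponent_top]
  apply eLpNormEssSup_le_of_ae_bound (C := 4 * c k)
  filter_upwards [hglim, hEk, htb] with ω h1 h2 h3
  by_cases hωm : ω ∈ H m
  · rw [Set.indicator_of_mem hωm, Pi.sub_apply]
    obtain ⟨hGk, hEkk⟩ := hHmem hωm k hkm
    have e1 : ‖g ω - gk k ω‖ ≤ 2 * c k := h1 m hωm k hkm
    have e2 : ‖gk k ω - M t (fk k) ω‖ ≤ c k := h3 hGk
    have e3 : ‖M t (fk k) ω - M t f ω‖ ≤ c k := by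
      rw [norm_sub_rev]; exact h2 k hEkk t ht0
    calc ‖g ω - M t f ω‖
        = ‖(g ω - gk k ω) + (gk k ω - M t (fk k) ω) + (M t (fk k) ω - M t f ω)‖ := by ring_nf
      _ ≤ ‖(g ω - gk k ω) + (gk k ω - M t (fk k) ω)‖ + ‖M t (fk k) ω - M t f ω‖ :=
          norm_add_le _ _
      _ ≤ ‖g ω - gk k ω‖ + ‖gk k ω - M t (fk k) ω‖ + ‖M t (fk k) ω - M t f ω‖ := by
          linarith [norm_add_le (g ω - gk k ω) (gk k ω - M t (fk k) ω)]
      _ ≤ 4 * c k := by linarith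
  · rw [Set.indicator_of_notMem hωm]
    simpa using le_of_lt (by positivity : (0:ℝ) < 4 * c k)

/-- Let `X` be a Banach space and `M_t : X → L⁰(Ω,μ)`, `t > 0`, a family of
linear maps whose maximal function `M*(f) = sup_{t>0}|M_t(f)|` lies in `L⁰` for every `f ∈ X`.
If `M*` is continuous at `0 ∈ X` into the measure topology of `L⁰`, then the set
`X_c = {f ∈ X : {M_t(f)} converges a.u. as t → ∞}` is closed in `X`; the same holds for the
net taken as `t → 0⁺`. -/

theorem stmt5 {Ω : Type*} [MeasurableSpace Ω] (μ : Measure Ω) [SigmaFinite μ]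
    {X : Type*} [NormedAddCommGroup X] [NormedSpace ℝ X] [CompleteSpace X]
    (M : ℝ → X →ₗ[ℝ] Ω → ℂ)
    (hL0 : ∀ t : ℝ, 0 < t → ∀ f : X, AEMeasurable (M t f) μ)
    (hmax : ∀ f : X, AEMeasurable (maximalFn M f) μ ∧ ∀ᵐ ω ∂μ, maximalFn M f ω < ⊤)
    (hcont : ∀ ε δ : ℝ, 0 < ε → 0 < δ → ∃ η : ℝ, 0 < η ∧ ∀ f : X, ‖f‖ ≤ η →
      μ {ω | ENNReal.ofReal δ < maximalFn M f ω} ≤ ENNReal.ofReal ε) :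
    IsClosed {f : X | ∃ g : Ω → ℂ, AUTendsto μ atTop (fun t : ℝ => M t f) g} ∧
    IsClosed {f : X | ∃ g : Ω → ℂ, AUTendsto μ (𝓝[Ioi (0:ℝ)] 0) (fun t : ℝ => M t f) g} := by
  constructor
  · exact aux_closed μ M (fun f => (hmax f).1) hcont atTop (eventually_gt_atTop 0)
  · exact aux_closed μ M (fun f => (hmax f).1) hcont (𝓝[Ioi (0:ℝ)] 0)
      (eventually_mem_nhdsWithin.mono fun t ht => ht)
end
end

section
/- Let 1 ≤ p < ∞ and let 𝒯 = {T_s}_{s≥0} be a semigroup of Dunford–Schwartz operators strongly continuous in L¹(Ω,μ). If t₀ > 0, g ∈ Lᵖ(Ω,μ), and f = M_{t₀}(𝒯)(g) = (1/t₀)∫₀^{t₀} T_s(g) ds, then ‖M_t(𝒯)(f) − f‖_p → 0 as t → 0⁺. If in addition g ∈ L¹ ∩ L^∞, then ‖M_t(𝒯)(f) − f‖_∞ → 0 as t → 0⁺. -/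
open MeasureTheory Filter Set Topology
open scoped ENNReal NNReal

noncomputable section

lemma DS_ae_congr {Ω : Type*} [MeasurableSpace Ω] {μ : Measure Ω} (𝒯 : DSSemigroup μ)
    (p : ℝ≥0∞) (hp1 : 1 ≤ p) {s : ℝ} (hs : 0 ≤ s) {f₁ f₂ : Ω → ℂ}
    (h₁ : AEStronglyMeasurable f₁ μ) (h₂ : AEStronglyMeasurable f₂ μ)
    (h : f₁ =ᵐ[μ] f₂) : 𝒯.T s f₁ =ᵐ[μ] 𝒯.T s f₂ := by
  have hp0 : p ≠ 0 := (lt_of_lt_of_le zero_lt_one hp1).ne'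
  have hsub : f₁ - f₂ =ᵐ[μ] 0 := by
    filter_upwards [h] with ω hω
    simp [Pi.sub_apply, hω]
  have h0 : eLpNorm (f₁ - f₂) p μ = 0 := by
    rw [eLpNorm_congr_ae hsub, eLpNorm_zero]
  have hle : eLpNorm (𝒯.T s (f₁ - f₂)) p μ = 0 :=
    le_antisymm (h0 ▸ 𝒯.contraction p hp1 s hs _) (zero_le)
  have hm : AEStronglyMeasurable (𝒯.T s (f₁ - f₂)) μ :=
    𝒯.aestronglyMeasurable s hs _ (h₁.sub h₂)
  have hz := (eLpNorm_eq_zero_iff hm hp0).mp hle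
  rw [map_sub] at hz
  filter_upwards [hz] with ω hω
  have h' : 𝒯.T s f₁ ω - 𝒯.T s f₂ ω = 0 := hω
  exact sub_eq_zero.mp h'

lemma DS_exists_clm {Ω : Type*} [MeasurableSpace Ω] {μ : Measure Ω} (𝒯 : DSSemigroup μ)
    (p : ℝ≥0∞) [Fact (1 ≤ p)] {s : ℝ} (hs : 0 ≤ s) :
    ∃ S : Lp ℂ p μ →L[ℂ] Lp ℂ p μ, ∀ x : Lp ℂ p μ, ⇑(S x) =ᵐ[μ] 𝒯.T s ⇑x := by
  have hp1 : 1 ≤ p := Fact.out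
  have hmem : ∀ x : Lp ℂ p μ, MemLp (𝒯.T s ⇑x) p μ := fun x =>
    ⟨𝒯.aestronglyMeasurable s hs _ (Lp.aestronglyMeasurable x),
      lt_of_le_of_lt (𝒯.contraction p hp1 s hs _) (Lp.eLpNorm_lt_top x)⟩
  refine ⟨LinearMap.mkContinuous
    { toFun := fun x => (hmem x).toLp
      map_add' := ?_
      map_smul' := ?_ } 1 ?_, fun x => (hmem x).coeFn_toLp⟩
  · intro x y
    have hae : 𝒯.T s ⇑(x + y) =ᵐ[μ] 𝒯.T s ⇑x + 𝒯.T s ⇑y := by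
      have := DS_ae_congr 𝒯 p hp1 hs (Lp.aestronglyMeasurable (x + y))
        ((Lp.aestronglyMeasurable x).add (Lp.aestronglyMeasurable y)) (Lp.coeFn_add x y)
      rwa [map_add] at this
    exact ((hmem (x + y)).toLp_congr ((hmem x).add (hmem y)) hae).trans
      (MemLp.toLp_add (hmem x) (hmem y))
  · intro c x
    have hae : 𝒯.T s ⇑(c • x) =ᵐ[μ] c • 𝒯.T s ⇑x := by
      have := DS_ae_congr 𝒯 p hp1 hs (Lp.aestronglyMeasurable (c • x))
        ((Lp.aestronglyMeasurable x).const_smul c) (Lp.coeFn_smul c x)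
      rwa [_root_.map_smul] at this
    exact ((hmem (c • x)).toLp_congr ((hmem x).const_smul c) hae).trans
      (MemLp.toLp_const_smul c (hmem x))
  · intro x
    rw [one_mul]
    show ‖(hmem x).toLp‖ ≤ ‖x‖
    rw [Lp.norm_toLp, Lp.norm_def]
    exact ENNReal.toReal_mono (Lp.eLpNorm_ne_top x) (𝒯.contraction p hp1 s hs _)

lemma linfty_K_closed {Ω : Type*} [MeasurableSpace Ω] {μ : Measure Ω}
    (p : ℝ≥0∞) [Fact (1 ≤ p)] (R : ℝ≥0∞) :
    IsClosed {x : Lp ℂ p μ | eLpNorm (⇑x) ⊤ μ ≤ R} := by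
  have hp1 : 1 ≤ p := Fact.out
  have hp0 : p ≠ 0 := (lt_of_lt_of_le zero_lt_one hp1).ne'
  refine IsSeqClosed.isClosed ?_
  intro x x₀ hmem htend
  have h1 : Tendsto (fun n => eLpNorm (⇑(x n) - ⇑x₀) p μ) atTop (𝓝 0) :=
    (Lp.tendsto_Lp_iff_tendsto_eLpNorm' x x₀).mp htend
  have h2 : TendstoInMeasure μ (fun n => ⇑(x n)) atTop ⇑x₀ :=
    tendstoInMeasure_of_tendsto_eLpNorm hp0 (fun n => Lp.aestronglyMeasurable (x n))
      (Lp.aestronglyMeasurable x₀) h1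
  obtain ⟨ns, _, hae⟩ := h2.exists_seq_tendsto_ae
  have hball : ∀ n : ℕ, ∀ᵐ ω ∂μ, (‖(x n) ω‖₊ : ℝ≥0∞) ≤ R := by
    intro n
    have := hmem n
    rw [Set.mem_setOf_eq, eLpNorm_exponent_top, eLpNormEssSup] at this
    filter_upwards [ENNReal.ae_le_essSup (fun ω => (‖(x n) ω‖₊ : ℝ≥0∞))] with ω hω
    exact hω.trans this
  rw [Set.mem_setOf_eq, eLpNorm_exponent_top, eLpNormEssSup]
  have hall : ∀ᵐ ω ∂μ, ∀ n : ℕ, (‖(x n) ω‖₊ : ℝ≥0∞) ≤ R := (ae_all_iff).mpr hball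
  have hae2 : ∀ᵐ ω ∂μ, (‖x₀ ω‖₊ : ℝ≥0∞) ≤ R := by
    filter_upwards [hall, hae] with ω hω hconv
    have hT : Tendsto (fun i => (‖(x (ns i)) ω‖₊ : ℝ≥0∞)) atTop (𝓝 (‖x₀ ω‖₊ : ℝ≥0∞)) :=
      ENNReal.tendsto_coe.mpr hconv.nnnorm
    exact le_of_tendsto hT (Eventually.of_forall fun i => hω (ns i))
  exact essSup_le_of_ae_le R hae2

lemma linfty_setIntegral_bound {Ω : Type*} [MeasurableSpace Ω] {μ : Measure Ω}
    (p : ℝ≥0∞) [Fact (1 ≤ p)] (F : ℝ → Lp ℂ p μ) {a b : ℝ} (hab : a ≤ b)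
    (hF : IntegrableOn F (Ioc a b) volume) {R : ℝ≥0∞}
    (hR : ∀ u ∈ Ioc a b, eLpNorm (⇑(F u)) ⊤ μ ≤ R) :
    eLpNorm (⇑(∫ u in Ioc a b, F u)) ⊤ μ ≤ ENNReal.ofReal (b - a) * R := by
  rcases eq_or_lt_of_le hab with rfl | hlt
  · rw [Set.Ioc_self]
    simp only [Measure.restrict_empty, integral_zero_measure]
    rw [eLpNorm_congr_ae (Lp.coeFn_zero ℂ p μ), eLpNorm_zero]
    exact zero_le
  · set K : Set (Lp ℂ p μ) := {x : Lp ℂ p μ | eLpNorm (⇑x) ⊤ μ ≤ R} with hK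
    have hconv : Convex ℝ K := by
      intro x hx y hy α β hα hβ hαβ
      have hcoe : ⇑(α • x + β • y) =ᵐ[μ] α • ⇑x + β • ⇑y :=
        (Lp.coeFn_add _ _).trans ((Lp.coeFn_smul α x).add (Lp.coeFn_smul β y))
      show eLpNorm (⇑(α • x + β • y)) ⊤ μ ≤ R
      rw [eLpNorm_congr_ae hcoe]
      calc eLpNorm (α • ⇑x + β • ⇑y) ⊤ μ
          ≤ eLpNorm (α • ⇑x) ⊤ μ + eLpNorm (β • ⇑y) ⊤ μ :=
            eLpNorm_add_le ((Lp.aestronglyMeasurable x).const_smul α)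
              ((Lp.aestronglyMeasurable y).const_smul β) le_top
        _ = ‖α‖ₑ * eLpNorm (⇑x) ⊤ μ + ‖β‖ₑ * eLpNorm (⇑y) ⊤ μ := by
            rw [eLpNorm_const_smul, eLpNorm_const_smul]
        _ ≤ ENNReal.ofReal α * R + ENNReal.ofReal β * R := by
            rw [Real.enorm_eq_ofReal hα, Real.enorm_eq_ofReal hβ]
            exact add_le_add (mul_le_mul_right hx _) (mul_le_mul_right hy _)
        _ = ENNReal.ofReal (α + β) * R := by rw [ENNReal.ofReal_add hα hβ, add_mul]
        _ = R := by rw [hαβ, ENNReal.ofReal_one, one_mul]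
    have hclosed : IsClosed K := linfty_K_closed p R
    haveI hfin : IsFiniteMeasure (volume.restrict (Ioc a b)) := by
      constructor
      rw [Measure.restrict_apply_univ, Real.volume_Ioc]
      exact ENNReal.ofReal_lt_top
    haveI hne : NeZero (volume.restrict (Ioc a b)) := by
      constructor
      intro h
      have h2 : (volume.restrict (Ioc a b)) univ = 0 := by rw [h]; simp
      rw [Measure.restrict_apply_univ, Real.volume_Ioc] at h2
      rw [ENNReal.ofReal_eq_zero] at h2
      linarith
    have havg : (⨍ u in Ioc a b, F u) ∈ K := by
      refine Convex.average_mem hconv hclosed ?_ hF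
      filter_upwards [ae_restrict_mem measurableSet_Ioc] with u hu
      exact hR u hu
    have hvol : volume.real (Ioc a b) = b - a := by
      rw [Real.volume_real_Ioc_of_le (by linarith)]
    have hint : (∫ u in Ioc a b, F u) = (b - a) • (⨍ u in Ioc a b, F u) := by
      rw [setAverage_eq, hvol, smul_smul, mul_inv_cancel₀ (by linarith), one_smul]
    rw [hint, eLpNorm_congr_ae (Lp.coeFn_smul (b - a) _), eLpNorm_const_smul,
      Real.enorm_eq_ofReal (by linarith)]
    exact mul_le_mul_right havg _

/-- Let `1 ≤ p < ∞` and let `𝒯` be a strongly continuous (in `L¹`) semigroup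
of Dunford–Schwartz operators.  If `t₀ > 0`, `g ∈ Lᵖ(Ω,μ)` and `f = M_{t₀}(𝒯)(g) =
(1/t₀)∫₀^{t₀} T_s(g) ds`, then `‖M_t(𝒯)(f) − f‖_p → 0` as `t → 0⁺`; if moreover
`g ∈ L¹ ∩ L^∞`, then also `‖M_t(𝒯)(f) − f‖_∞ → 0` as `t → 0⁺`.  Here `A` realizes the
`Lᵖ`-valued map `s ↦ T_s(g)` and `B` the map `s ↦ T_s(f)`. -/
theorem stmt8 {Ω : Type*} [MeasurableSpace Ω] (μ : Measure Ω) [SigmaFinite μ]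
    (𝒯 : DSSemigroup μ) (p : ℝ≥0∞) [Fact (1 ≤ p)] (hp : p ≠ ⊤)
    (g : Ω → ℂ) (hg : MemLp g p μ)
    (A : ℝ → Lp ℂ p μ) (hA : ∀ s : ℝ, 0 ≤ s → ⇑(A s) =ᵐ[μ] 𝒯.T s g)
    (t₀ : ℝ) (ht₀ : 0 < t₀)
    (f : Lp ℂ p μ) (hfdef : f = t₀⁻¹ • ∫ s in Set.Ioc (0:ℝ) t₀, A s)
    (B : ℝ → Lp ℂ p μ) (hB : ∀ s : ℝ, 0 ≤ s → ⇑(B s) =ᵐ[μ] 𝒯.T s ⇑f) :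
    Tendsto (fun t : ℝ => ‖(t⁻¹ • ∫ s in Set.Ioc (0:ℝ) t, B s) - f‖)
      (𝓝[Ioi (0:ℝ)] 0) (𝓝 0) ∧
    (MemLp g 1 μ → MemLp g ⊤ μ →
      Tendsto (fun t : ℝ => eLpNorm (⇑(t⁻¹ • ∫ s in Set.Ioc (0:ℝ) t, B s : Lp ℂ p μ) - ⇑f) ⊤ μ)
        (𝓝[Ioi (0:ℝ)] 0) (𝓝 0)) := by
  have hp1 : 1 ≤ p := Fact.out
  by_cases hInt : IntegrableOn A (Ioc (0:ℝ) t₀) volume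
  case neg =>
    have hf0 : f = 0 := by rw [hfdef, integral_undef hInt, smul_zero]
    have hB0 : ∀ s : ℝ, 0 ≤ s → B s = 0 := by
      intro s hs
      apply Lp.ext
      have h1 : (⇑f : Ω → ℂ) =ᵐ[μ] (0 : Ω → ℂ) := hf0 ▸ Lp.coeFn_zero ℂ p μ
      have h2 := DS_ae_congr 𝒯 p hp1 hs (f₂ := (0 : Ω → ℂ)) (Lp.aestronglyMeasurable f)
        aestronglyMeasurable_const h1
      have h3 : 𝒯.T s (0 : Ω → ℂ) = 0 := map_zero _
      refine (hB s hs).trans ((h2.trans ?_).trans (Lp.coeFn_zero ℂ p μ).symm)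
      rw [h3]
    have hIz : ∀ t : ℝ, 0 < t → (∫ s in Ioc (0:ℝ) t, B s) = 0 := by
      intro t ht
      rw [setIntegral_congr_fun measurableSet_Ioc (fun s hs => hB0 s (le_of_lt hs.1))]
      simp
    constructor
    · refine Tendsto.congr' ?_ tendsto_const_nhds
      filter_upwards [self_mem_nhdsWithin] with t ht
      rw [hIz t ht, hf0, smul_zero, sub_zero, norm_zero]
    · intro _ _
      refine Tendsto.congr' ?_ tendsto_const_nhds
      filter_upwards [self_mem_nhdsWithin] with t ht
      rw [hIz t ht, hf0, smul_zero, sub_self, eLpNorm_zero]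
  case pos =>
    set C : ℝ := (eLpNorm g p μ).toReal with hCdef
    have hC0 : 0 ≤ C := ENNReal.toReal_nonneg
    have hAnorm : ∀ u : ℝ, 0 ≤ u → ‖A u‖ ≤ C := by
      intro u hu
      rw [Lp.norm_def, eLpNorm_congr_ae (hA u hu)]
      exact ENNReal.toReal_mono hg.2.ne (𝒯.contraction p hp1 u hu g)
    have hAeq : ∀ s u : ℝ, 0 ≤ s → 0 ≤ u → ⇑(A (s + u)) =ᵐ[μ] 𝒯.T s ⇑(A u) := by
      intro s u hs hu
      have e2 : 𝒯.T s ⇑(A u) =ᵐ[μ] 𝒯.T s (𝒯.T u g) :=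
        DS_ae_congr 𝒯 p hp1 hs (Lp.aestronglyMeasurable _)
          (𝒯.aestronglyMeasurable u hu g hg.1) (hA u hu)
      refine (hA (s + u) (add_nonneg hs hu)).trans ?_
      rw [𝒯.map_add s u hs hu]
      exact e2.symm
    have hShiftInt : ∀ s : ℝ, 0 ≤ s → IntegrableOn A (Ioc s (s + t₀)) volume := by
      intro s hs
      obtain ⟨S, hS⟩ := DS_exists_clm 𝒯 p (s := s) hs
      have h1 : IntegrableOn (fun u => S (A u)) (Ioc 0 t₀) volume :=
        S.integrable_comp hInt
      have h2 : IntegrableOn (fun u => A (u + s)) (Ioc 0 t₀) volume := by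
        refine h1.congr ?_
        filter_upwards [ae_restrict_mem measurableSet_Ioc] with u hu
        have he : S (A u) = A (s + u) := Lp.ext ((hS (A u)).trans (hAeq s u hs hu.1.le).symm)
        rw [he, add_comm]
      have h3 : IntervalIntegrable (fun u => A (u + s)) volume 0 t₀ :=
        (intervalIntegrable_iff_integrableOn_Ioc_of_le ht₀.le).mpr h2
      have h4 := h3.comp_add_right (-s)
      have he : (fun x => A (x + -s + s)) = A := by
        funext x; congr 1; ring
      rw [he] at h4
      have h5 : IntervalIntegrable A volume s (s + t₀) := by
        have e1 : (0:ℝ) - -s = s := by ring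
        have e2 : t₀ - -s = s + t₀ := by ring
        rwa [e1, e2] at h4
      exact (intervalIntegrable_iff_integrableOn_Ioc_of_le (by linarith)).mp h5
    have hInt2 : IntegrableOn A (Ioc 0 (2 * t₀)) volume := by
      have h := hInt.union (hShiftInt t₀ ht₀.le)
      rw [Ioc_union_Ioc_eq_Ioc ht₀.le (by linarith : t₀ ≤ t₀ + t₀)] at h
      rw [two_mul]
      exact h
    set Fp : ℝ → Lp ℂ p μ := fun x => ∫ u in Ioc (0:ℝ) x, A u with hFp
    have hFpcont : ContinuousOn Fp (Icc 0 (2 * t₀)) :=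
      intervalIntegral.continuousOn_primitive
        ((integrableOn_Icc_iff_integrableOn_Ioc).mpr hInt2)
    have hsplit : ∀ m b : ℝ, 0 ≤ m → m ≤ b → IntegrableOn A (Ioc 0 m) volume →
        IntegrableOn A (Ioc m b) volume → Fp b - Fp m = ∫ u in Ioc m b, A u := by
      intro m b hm hmb hi1 hi2
      have hu : (∫ u in Ioc (0:ℝ) m ∪ Ioc m b, A u) =
          (∫ u in Ioc (0:ℝ) m, A u) + ∫ u in Ioc m b, A u :=
        setIntegral_union (Ioc_disjoint_Ioc_of_le le_rfl) measurableSet_Ioc hi1 hi2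
      rw [Ioc_union_Ioc_eq_Ioc hm hmb] at hu
      simp only [hFp]
      rw [hu]
      abel
    have hchange : ∀ s : ℝ, 0 ≤ s → (∫ u in Ioc (0:ℝ) t₀, A (s + u)) = ∫ u in Ioc s (s + t₀), A u := by
      intro s hs
      have e1 : (∫ u in Ioc (0:ℝ) t₀, A (s + u)) = ∫ u in (0:ℝ)..t₀, A (u + s) := by
        rw [intervalIntegral.integral_of_le ht₀.le]
        exact setIntegral_congr_fun measurableSet_Ioc (fun u _ => by rw [add_comm])
      rw [e1, intervalIntegral.integral_comp_add_right A s, zero_add,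
        intervalIntegral.integral_of_le (by linarith : s ≤ t₀ + s), add_comm t₀ s]
    have hBid : ∀ s : ℝ, 0 ≤ s → s ≤ t₀ → B s = t₀⁻¹ • (Fp (s + t₀) - Fp s) := by
      intro s hs hst
      obtain ⟨S, hS⟩ := DS_exists_clm 𝒯 p (s := s) hs
      have hBS : B s = S f := Lp.ext ((hB s hs).trans (hS f).symm)
      have hSf : S f = t₀⁻¹ • ∫ u in Ioc (0:ℝ) t₀, S (A u) := by
        rw [hfdef, ContinuousLinearMap.map_smul_of_tower,
          ← ContinuousLinearMap.integral_comp_comm S hInt]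
      have hSfA : (∫ u in Ioc (0:ℝ) t₀, S (A u)) = ∫ u in Ioc (0:ℝ) t₀, A (s + u) :=
        setIntegral_congr_fun measurableSet_Ioc
          (fun u hu => Lp.ext ((hS (A u)).trans (hAeq s u hs hu.1.le).symm))
      rw [hBS, hSf, hSfA, hchange s hs,
        ← hsplit s (s + t₀) hs (by linarith) (hInt.mono_set (Ioc_subset_Ioc_right hst))
          (hShiftInt s hs)]
    have hfF : f = t₀⁻¹ • Fp t₀ := hfdef
    have hIoc2 : ∀ s : ℝ, 0 ≤ s → s ≤ t₀ → IntegrableOn A (Ioc t₀ (s + t₀)) volume :=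
      fun s hs hst => (hShiftInt t₀ ht₀.le).mono_set (Ioc_subset_Ioc_right (by linarith))
    have hdiff : ∀ s : ℝ, 0 ≤ s → s ≤ t₀ →
        B s - f = t₀⁻¹ • ((∫ u in Ioc t₀ (s + t₀), A u) - ∫ u in Ioc (0:ℝ) s, A u) := by
      intro s hs hst
      have h1 : Fp (s + t₀) - Fp t₀ = ∫ u in Ioc t₀ (s + t₀), A u :=
        hsplit t₀ (s + t₀) ht₀.le (by linarith) hInt (hIoc2 s hs hst)
      have h2 : (∫ u in Ioc (0:ℝ) s, A u) = Fp s := rfl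
      rw [hBid s hs hst, hfF, ← smul_sub, ← h1, h2]
      congr 1
      abel
    have hkey : ∀ s : ℝ, 0 ≤ s → s ≤ t₀ → ‖B s - f‖ ≤ 2 * C / t₀ * s := by
      intro s hs hst
      have hX : ‖∫ u in Ioc t₀ (s + t₀), A u‖ ≤ C * s := by
        have h := norm_setIntegral_le_of_norm_le_const (μ := volume) (C := C) (s := Ioc t₀ (s + t₀)) (f := A)
          (by rw [Real.volume_Ioc]; exact ENNReal.ofReal_lt_top)
          (fun u hu => hAnorm u (le_trans ht₀.le hu.1.le))
        rw [Real.volume_real_Ioc_of_le (by linarith)] at h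
        calc ‖∫ u in Ioc t₀ (s + t₀), A u‖ ≤ C * (s + t₀ - t₀) := h
          _ = C * s := by ring_nf
      have hY : ‖∫ u in Ioc (0:ℝ) s, A u‖ ≤ C * s := by
        have h := norm_setIntegral_le_of_norm_le_const (μ := volume) (C := C) (s := Ioc (0:ℝ) s) (f := A)
          (by rw [Real.volume_Ioc]; exact ENNReal.ofReal_lt_top)
          (fun u hu => hAnorm u hu.1.le)
        rw [Real.volume_real_Ioc_of_le hs, sub_zero] at h
        exact h
      rw [hdiff s hs hst, norm_smul]
      have hn : ‖t₀⁻¹‖ = t₀⁻¹ := abs_of_pos (inv_pos.mpr ht₀)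
      rw [hn]
      calc t₀⁻¹ * ‖(∫ u in Ioc t₀ (s + t₀), A u) - ∫ u in Ioc (0:ℝ) s, A u‖
          ≤ t₀⁻¹ * (C * s + C * s) := by
            refine mul_le_mul_of_nonneg_left ?_ (inv_nonneg.mpr ht₀.le)
            exact le_trans (norm_sub_le _ _) (add_le_add hX hY)
        _ = 2 * C / t₀ * s := by
            have ht0' : t₀ ≠ 0 := ht₀.ne'
            field_simp
            ring
    have hBintOn : ∀ t : ℝ, 0 < t → t ≤ t₀ → IntegrableOn B (Ioc 0 t) volume := by
      intro t ht htle
      have hcont : ContinuousOn (fun s => t₀⁻¹ • (Fp (s + t₀) - Fp s)) (Icc 0 t₀) := by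
        refine ContinuousOn.fun_const_smul (ContinuousOn.sub ?_ ?_) _
        · refine hFpcont.comp ((continuous_add_right t₀).continuousOn) ?_
          intro s hs
          simp only [mem_Icc] at hs ⊢
          constructor <;> linarith [hs.1, hs.2]
        · exact hFpcont.mono (Icc_subset_Icc_right (by linarith))
      have h1 : IntegrableOn (fun s => t₀⁻¹ • (Fp (s + t₀) - Fp s)) (Icc 0 t₀) volume :=
        hcont.integrableOn_compact isCompact_Icc
      have h2 := h1.mono_set (Ioc_subset_Icc_self.trans (Icc_subset_Icc_right htle))
      refine h2.congr ?_
      filter_upwards [ae_restrict_mem measurableSet_Ioc] with s hs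
      exact (hBid s hs.1.le (hs.2.trans htle)).symm
    have hconstInt : ∀ t : ℝ, IntegrableOn (fun _ : ℝ => f) (Ioc (0:ℝ) t) volume :=
      fun t => integrableOn_const (by rw [Real.volume_Ioc]; exact ENNReal.ofReal_ne_top)
    have hident : ∀ t : ℝ, 0 < t → t ≤ t₀ →
        (t⁻¹ • ∫ s in Ioc (0:ℝ) t, B s) - f = t⁻¹ • ∫ s in Ioc (0:ℝ) t, (B s - f) := by
      intro t ht htle
      rw [integral_sub (hBintOn t ht htle) (hconstInt t), setIntegral_const,
        Real.volume_real_Ioc_of_le ht.le, sub_zero, smul_sub, smul_smul,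
        inv_mul_cancel₀ ht.ne', one_smul]
    have hbound1 : ∀ t ∈ Ioc (0:ℝ) t₀,
        ‖(t⁻¹ • ∫ s in Ioc (0:ℝ) t, B s) - f‖ ≤ 2 * C / t₀ * t := by
      intro t ht
      rw [hident t ht.1 ht.2, norm_smul]
      have hZ : ‖∫ s in Ioc (0:ℝ) t, (B s - f)‖ ≤ (2 * C / t₀ * t) * t := by
        have h := norm_setIntegral_le_of_norm_le_const (μ := volume) (C := 2 * C / t₀ * t) (s := Ioc (0:ℝ) t)
          (f := fun s => B s - f)
          (by rw [Real.volume_Ioc]; exact ENNReal.ofReal_lt_top)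
          (fun s hs => le_trans (hkey s hs.1.le (hs.2.trans ht.2))
            (mul_le_mul_of_nonneg_left hs.2 (div_nonneg (by linarith) ht₀.le)))
        rw [Real.volume_real_Ioc_of_le ht.1.le, sub_zero] at h
        exact h
      have hn : ‖t⁻¹‖ = t⁻¹ := abs_of_pos (inv_pos.mpr ht.1)
      rw [hn]
      calc t⁻¹ * ‖∫ s in Ioc (0:ℝ) t, (B s - f)‖ ≤ t⁻¹ * ((2 * C / t₀ * t) * t) :=
            mul_le_mul_of_nonneg_left hZ (inv_nonneg.mpr ht.1.le)
        _ = 2 * C / t₀ * t := by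
            have h1 : t ≠ 0 := ht.1.ne'
            have h2 : t₀ ≠ 0 := ht₀.ne'
            field_simp
    constructor
    · refine squeeze_zero' (g := fun t : ℝ => 2 * C / t₀ * t) ?_ ?_ ?_
      · exact Eventually.of_forall fun t => norm_nonneg _
      · filter_upwards [Ioc_mem_nhdsGT_of_mem ⟨le_refl (0:ℝ), ht₀⟩] with t ht
        exact hbound1 t ht
      · have h : Tendsto (fun t : ℝ => 2 * C / t₀ * t) (𝓝[Ioi 0] 0) (𝓝 (2 * C / t₀ * 0)) :=
          ((continuous_const.mul continuous_id).tendsto (0:ℝ)).mono_left nhdsWithin_le_nhds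
        simpa using h
    · intro hg1 hginf
      set M : ℝ≥0∞ := eLpNorm g ⊤ μ with hMdef
      have hMne : M ≠ ⊤ := hginf.2.ne
      have hAinf : ∀ u : ℝ, 0 ≤ u → eLpNorm (⇑(A u)) ⊤ μ ≤ M := by
        intro u hu
        rw [eLpNorm_congr_ae (hA u hu)]
        exact 𝒯.contraction ⊤ le_top u hu g
      have hkeyinf : ∀ s : ℝ, 0 ≤ s → s ≤ t₀ →
          eLpNorm (⇑(B s - f)) ⊤ μ ≤ ENNReal.ofReal (t₀⁻¹ * (2 * s)) * M := by
        intro s hs hst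
        rw [hdiff s hs hst]
        have hXb : eLpNorm (⇑(∫ u in Ioc t₀ (s + t₀), A u)) ⊤ μ ≤ ENNReal.ofReal s * M := by
          have h := linfty_setIntegral_bound p A (a := t₀) (b := s + t₀) (by linarith)
            (hIoc2 s hs hst) (fun u hu => hAinf u (le_trans ht₀.le hu.1.le))
          rwa [add_sub_cancel_right] at h
        have hYb : eLpNorm (⇑(∫ u in Ioc (0:ℝ) s, A u)) ⊤ μ ≤ ENNReal.ofReal s * M := by
          have h := linfty_setIntegral_bound p A (a := 0) (b := s) hs
            (hInt.mono_set (Ioc_subset_Ioc_right hst)) (fun u hu => hAinf u hu.1.le)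
          rwa [sub_zero] at h
        set X := ∫ u in Ioc t₀ (s + t₀), A u
        set Y := ∫ u in Ioc (0:ℝ) s, A u
        calc eLpNorm (⇑(t₀⁻¹ • (X - Y))) ⊤ μ
            = ‖t₀⁻¹‖ₑ * eLpNorm (⇑(X - Y)) ⊤ μ := by
              rw [eLpNorm_congr_ae (Lp.coeFn_smul t₀⁻¹ (X - Y)), eLpNorm_const_smul]
          _ ≤ ENNReal.ofReal t₀⁻¹ * (eLpNorm (⇑X) ⊤ μ + eLpNorm (⇑Y) ⊤ μ) := by
              rw [Real.enorm_eq_ofReal (inv_nonneg.mpr ht₀.le)]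
              refine mul_le_mul_right ?_ _
              calc eLpNorm (⇑(X - Y)) ⊤ μ = eLpNorm (⇑X - ⇑Y) ⊤ μ :=
                    eLpNorm_congr_ae (Lp.coeFn_sub X Y)
                _ ≤ _ := eLpNorm_sub_le (Lp.aestronglyMeasurable X)
                    (Lp.aestronglyMeasurable Y) le_top
          _ ≤ ENNReal.ofReal t₀⁻¹ * (ENNReal.ofReal s * M + ENNReal.ofReal s * M) :=
              mul_le_mul_right (add_le_add hXb hYb) _
          _ = ENNReal.ofReal (t₀⁻¹ * (2 * s)) * M := by
              rw [← add_mul, ← ENNReal.ofReal_add hs hs, ← mul_assoc,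
                ← ENNReal.ofReal_mul (inv_nonneg.mpr ht₀.le),
                show s + s = 2 * s by ring]
      have hbound2 : ∀ t ∈ Ioc (0:ℝ) t₀,
          eLpNorm (⇑(t⁻¹ • ∫ s in Ioc (0:ℝ) t, B s : Lp ℂ p μ) - ⇑f) ⊤ μ
            ≤ ENNReal.ofReal (t₀⁻¹ * (2 * t)) * M := by
        intro t ht
        have e0 : eLpNorm (⇑(t⁻¹ • ∫ s in Ioc (0:ℝ) t, B s : Lp ℂ p μ) - ⇑f) ⊤ μ
            = eLpNorm (⇑((t⁻¹ • ∫ s in Ioc (0:ℝ) t, B s) - f)) ⊤ μ :=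
          (eLpNorm_congr_ae (Lp.coeFn_sub _ f)).symm
        rw [e0, hident t ht.1 ht.2]
        have hZ := linfty_setIntegral_bound p (fun s => B s - f) (a := 0) (b := t) ht.1.le
          ((hBintOn t ht.1 ht.2).sub (hconstInt t))
          (R := ENNReal.ofReal (t₀⁻¹ * (2 * t)) * M) ?_
        · calc eLpNorm (⇑(t⁻¹ • ∫ s in Ioc (0:ℝ) t, (B s - f))) ⊤ μ
              = ‖t⁻¹‖ₑ * eLpNorm (⇑(∫ s in Ioc (0:ℝ) t, (B s - f))) ⊤ μ := by
                rw [eLpNorm_congr_ae (Lp.coeFn_smul t⁻¹ _), eLpNorm_const_smul]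
            _ ≤ ENNReal.ofReal t⁻¹ *
                (ENNReal.ofReal (t - 0) * (ENNReal.ofReal (t₀⁻¹ * (2 * t)) * M)) := by
                rw [Real.enorm_eq_ofReal (inv_nonneg.mpr ht.1.le)]
                exact mul_le_mul_right hZ _
            _ = ENNReal.ofReal (t₀⁻¹ * (2 * t)) * M := by
                rw [sub_zero, ← mul_assoc, ← ENNReal.ofReal_mul (inv_nonneg.mpr ht.1.le),
                  inv_mul_cancel₀ ht.1.ne', ENNReal.ofReal_one, one_mul]
        · intro s hs
          refine le_trans (hkeyinf s hs.1.le (hs.2.trans ht.2)) ?_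
          refine mul_le_mul_left (ENNReal.ofReal_le_ofReal ?_) M
          have h1 : (0:ℝ) ≤ t₀⁻¹ := inv_nonneg.mpr ht₀.le
          nlinarith [hs.2]
      refine tendsto_of_tendsto_of_tendsto_of_le_of_le'
        (h := fun t : ℝ => ENNReal.ofReal (t₀⁻¹ * (2 * t)) * M) tendsto_const_nhds ?_ ?_ ?_
      · have hreal : Tendsto (fun t : ℝ => t₀⁻¹ * (2 * t)) (𝓝[Ioi 0] 0) (𝓝 0) := by
          have h0 : Tendsto (fun t : ℝ => t) (𝓝[Ioi (0:ℝ)] 0) (𝓝 0) :=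
            (tendsto_id : Tendsto (fun t : ℝ => t) (𝓝 (0:ℝ)) (𝓝 0)).mono_left
              nhdsWithin_le_nhds
          simpa using (h0.const_mul (2:ℝ)).const_mul t₀⁻¹
        have h2 : Tendsto (fun t : ℝ => ENNReal.ofReal (t₀⁻¹ * (2 * t)) * M)
            (𝓝[Ioi 0] 0) (𝓝 (0 * M)) :=
          ENNReal.Tendsto.mul_const (by
            simpa using (ENNReal.tendsto_ofReal hreal)) (Or.inr hMne)
        rwa [zero_mul] at h2
      · exact Eventually.of_forall fun t => zero_le
      · filter_upwards [Ioc_mem_nhdsGT_of_mem ⟨le_refl (0:ℝ), ht₀⟩] with t ht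
        exact hbound2 t ht
end
end

section
/- (Local mean ergodic theorem.) Let 1 ≤ p < ∞ and let 𝒯 = {T_s}_{s≥0} be a semigroup of Dunford–Schwartz operators strongly continuous in L¹(Ω,μ). Then for every f ∈ Lᵖ(Ω,μ), ‖M_t(𝒯)(f) − f‖_p → 0 as t → 0⁺, where M_t(𝒯)(f) = (1/t)∫₀ᵗ T_s(f) ds. -/
open MeasureTheory Filter Set Topology
open scoped ENNReal NNReal

noncomputable section

private lemma aux_interp {Ω : Type*} [MeasurableSpace Ω] {μ : Measure Ω} {p : ℝ≥0∞}
    (hp1 : 1 ≤ p) (hpt : p ≠ ⊤) {C : ℝ≥0∞} (hC : C ≠ ⊤) (h : Ω → ℂ)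
    (hbd : eLpNorm h ⊤ μ ≤ C) :
    eLpNorm h p μ ≤ ((C + 1) ^ (p.toReal - 1) * eLpNorm h 1 μ) ^ (1 / p.toReal) := by
  have hp0 : p ≠ 0 := (lt_of_lt_of_le zero_lt_one hp1).ne'
  have hr1 : 1 ≤ p.toReal := by
    rw [← ENNReal.toReal_one]
    exact (ENNReal.toReal_le_toReal ENNReal.one_ne_top hpt).mpr hp1
  have hr0 : (0:ℝ) < p.toReal := lt_of_lt_of_le one_pos hr1
  rw [eLpNorm_eq_lintegral_rpow_enorm_toReal hp0 hpt, eLpNorm_one_eq_lintegral_enorm]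
  refine ENNReal.rpow_le_rpow ?_ (by positivity)
  have hCt : (C + 1 : ℝ≥0∞) ≠ ⊤ := ENNReal.add_ne_top.mpr ⟨hC, ENNReal.one_ne_top⟩
  have hne : ((C + 1) ^ (p.toReal - 1) : ℝ≥0∞) ≠ ⊤ :=
    ENNReal.rpow_ne_top_of_nonneg (by linarith) hCt
  rw [← lintegral_const_mul' _ _ hne]
  refine lintegral_mono_ae ?_
  have hbd' : eLpNormEssSup h μ ≤ C + 1 := by
    rw [← eLpNorm_exponent_top]; exact hbd.trans le_self_add
  filter_upwards [enorm_ae_le_eLpNormEssSup h μ] with x hx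
  by_cases h0 : ‖h x‖ₑ = 0
  · simp [h0, ENNReal.zero_rpow_of_pos hr0]
  · have hxt : ‖h x‖ₑ ≠ ⊤ := enorm_ne_top
    have : ‖h x‖ₑ ^ p.toReal
        = ‖h x‖ₑ ^ (p.toReal - 1) * ‖h x‖ₑ := by
      calc ‖h x‖ₑ ^ p.toReal = ‖h x‖ₑ ^ (p.toReal - 1 + 1) := by
            rw [sub_add_cancel]
        _ = ‖h x‖ₑ ^ (p.toReal - 1) * ‖h x‖ₑ ^ (1:ℝ) :=
            ENNReal.rpow_add _ _ h0 hxt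
        _ = ‖h x‖ₑ ^ (p.toReal - 1) * ‖h x‖ₑ := by rw [ENNReal.rpow_one]
    rw [this]
    exact mul_le_mul' (ENNReal.rpow_le_rpow (hx.trans hbd') (by linarith)) le_rfl

private lemma aux_tendsto {Ω ι : Type*} [MeasurableSpace Ω] {μ : Measure Ω} {p : ℝ≥0∞}
    (hp1 : 1 ≤ p) (hpt : p ≠ ⊤) {l : Filter ι} {h : ι → Ω → ℂ} {C : ℝ≥0∞} (hC : C ≠ ⊤)
    (hbd : ∀ᶠ i in l, eLpNorm (h i) ⊤ μ ≤ C)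
    (h1 : Tendsto (fun i => eLpNorm (h i) 1 μ) l (𝓝 0)) :
    Tendsto (fun i => eLpNorm (h i) p μ) l (𝓝 0) := by
  rw [ENNReal.tendsto_nhds_zero] at h1 ⊢
  intro ε hε
  have hr1 : 1 ≤ p.toReal := by
    rw [← ENNReal.toReal_one]
    exact (ENNReal.toReal_le_toReal ENNReal.one_ne_top hpt).mpr hp1
  have hr0 : (0:ℝ) < p.toReal := lt_of_lt_of_le one_pos hr1
  set m := min 1 ε with hm
  have hm0 : m ≠ 0 := by
    simp only [hm, ne_eq, min_eq_iff]
    rintro (⟨h', -⟩ | ⟨h', -⟩) <;> simp_all [hε.ne']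
  have hmt : m ≠ ⊤ := ((min_le_left _ _).trans_lt ENNReal.one_lt_top).ne
  have hCt : (C + 1 : ℝ≥0∞) ≠ ⊤ := ENNReal.add_ne_top.mpr ⟨hC, ENNReal.one_ne_top⟩
  set D := ((C + 1) ^ (p.toReal - 1) : ℝ≥0∞) with hD
  have hD0 : D ≠ 0 := (ENNReal.rpow_pos (lt_of_lt_of_le zero_lt_one le_add_self) hCt).ne'
  have hDt : D ≠ ⊤ := ENNReal.rpow_ne_top_of_nonneg (by linarith) hCt
  have hδ : 0 < m ^ p.toReal / D := by
    refine ENNReal.div_pos (fun hz => ?_) hDt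
    rcases ENNReal.rpow_eq_zero_iff.mp hz with ⟨h', -⟩ | ⟨h', -⟩
    · exact hm0 h'
    · exact hmt h'
  filter_upwards [h1 _ hδ, hbd] with i hi hbi
  calc eLpNorm (h i) p μ ≤ (D * eLpNorm (h i) 1 μ) ^ (1 / p.toReal) :=
        aux_interp hp1 hpt hC (h i) hbi
    _ ≤ (D * (m ^ p.toReal / D)) ^ (1 / p.toReal) :=
        ENNReal.rpow_le_rpow (mul_le_mul' le_rfl hi) (by positivity)
    _ = (m ^ p.toReal) ^ (1 / p.toReal) := by rw [ENNReal.mul_div_cancel hD0 hDt]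
    _ = m := by
        rw [← ENNReal.rpow_mul, mul_one_div_cancel hr0.ne', ENNReal.rpow_one]
    _ ≤ ε := min_le_right _ _

private lemma aux_contLp {Ω : Type*} [MeasurableSpace Ω] {μ : Measure Ω}
    (𝒯 : DSSemigroup μ) {p : ℝ≥0∞} (hp1 : 1 ≤ p) (hpt : p ≠ ⊤)
    {f : Ω → ℂ} (hf : MemLp f p μ) {s₀ : ℝ} (hs₀ : 0 ≤ s₀) :
    Tendsto (fun s => eLpNorm (𝒯.T s f - 𝒯.T s₀ f) p μ) (𝓝[Ici 0] s₀) (𝓝 0) := by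
  have hp0 : p ≠ 0 := (lt_of_lt_of_le zero_lt_one hp1).ne'
  have hfm : AEStronglyMeasurable f μ := hf.aestronglyMeasurable
  rw [ENNReal.tendsto_nhds_zero]
  intro ε hε
  set m := min 1 ε with hm
  have hm0 : m ≠ 0 := by
    simp only [hm, ne_eq, min_eq_iff]
    rintro (⟨h', -⟩ | ⟨h', -⟩) <;> simp_all [hε.ne']
  have hm3 : (0:ℝ≥0∞) < m / 3 :=
    ENNReal.div_pos hm0 (by norm_num)
  obtain ⟨g, hg, hgp⟩ := hf.exists_simpleFunc_eLpNorm_sub_lt hpt hm3.ne'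
  have hg1 : MemLp (⇑g) 1 μ :=
    (SimpleFunc.memLp_iff one_ne_zero ENNReal.one_ne_top).mpr
      ((SimpleFunc.memLp_iff hp0 hpt).mp hgp)
  have hgm : AEStronglyMeasurable (⇑g) μ := g.aestronglyMeasurable
  set C := eLpNorm (⇑g) ⊤ μ with hC
  have hCt : C ≠ ⊤ := (g.memLp_top μ).2.ne
  have hbd : ∀ᶠ s in 𝓝[Ici (0:ℝ)] s₀, eLpNorm (𝒯.T s (⇑g) - 𝒯.T s₀ (⇑g)) ⊤ μ ≤ C + C := by
    filter_upwards [self_mem_nhdsWithin] with s hs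
    calc eLpNorm (𝒯.T s (⇑g) - 𝒯.T s₀ (⇑g)) ⊤ μ
        ≤ eLpNorm (𝒯.T s (⇑g)) ⊤ μ + eLpNorm (𝒯.T s₀ (⇑g)) ⊤ μ :=
          eLpNorm_sub_le (𝒯.aestronglyMeasurable s hs _ hgm)
            (𝒯.aestronglyMeasurable s₀ hs₀ _ hgm) le_top
      _ ≤ C + C := add_le_add (𝒯.contraction ⊤ le_top s hs (⇑g))
            (𝒯.contraction ⊤ le_top s₀ hs₀ (⇑g))
  have hmid := aux_tendsto hp1 hpt (ENNReal.add_ne_top.mpr ⟨hCt, hCt⟩) hbd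
    (𝒯.strongContL1 (⇑g) hg1 s₀ hs₀)
  rw [ENNReal.tendsto_nhds_zero] at hmid
  filter_upwards [hmid _ hm3, self_mem_nhdsWithin] with s hsm hs
  have hTsf : AEStronglyMeasurable (𝒯.T s f) μ := 𝒯.aestronglyMeasurable s hs f hfm
  have hTs0f : AEStronglyMeasurable (𝒯.T s₀ f) μ := 𝒯.aestronglyMeasurable s₀ hs₀ f hfm
  have hTsg : AEStronglyMeasurable (𝒯.T s (⇑g)) μ := 𝒯.aestronglyMeasurable s hs _ hgm
  have hTs0g : AEStronglyMeasurable (𝒯.T s₀ (⇑g)) μ := 𝒯.aestronglyMeasurable s₀ hs₀ _ hgm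
  have e1 : 𝒯.T s f - 𝒯.T s₀ f =
      (𝒯.T s f - 𝒯.T s (⇑g)) + ((𝒯.T s (⇑g) - 𝒯.T s₀ (⇑g)) + (𝒯.T s₀ (⇑g) - 𝒯.T s₀ f)) := by
    abel
  have h1 : eLpNorm (𝒯.T s f - 𝒯.T s (⇑g)) p μ ≤ m / 3 := by
    rw [← map_sub]
    exact le_of_lt (lt_of_le_of_lt (𝒯.contraction p hp1 s hs (f - ⇑g)) hg)
  have h3 : eLpNorm (𝒯.T s₀ (⇑g) - 𝒯.T s₀ f) p μ ≤ m / 3 := by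
    rw [← map_sub]
    refine le_of_lt (lt_of_le_of_lt (𝒯.contraction p hp1 s₀ hs₀ (⇑g - f)) ?_)
    rwa [eLpNorm_sub_comm]
  calc eLpNorm (𝒯.T s f - 𝒯.T s₀ f) p μ
      ≤ eLpNorm (𝒯.T s f - 𝒯.T s (⇑g)) p μ +
        eLpNorm ((𝒯.T s (⇑g) - 𝒯.T s₀ (⇑g)) + (𝒯.T s₀ (⇑g) - 𝒯.T s₀ f)) p μ := by
        rw [e1]
        exact eLpNorm_add_le (hTsf.sub hTsg) ((hTsg.sub hTs0g).add (hTs0g.sub hTs0f)) hp1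
    _ ≤ eLpNorm (𝒯.T s f - 𝒯.T s (⇑g)) p μ +
        (eLpNorm (𝒯.T s (⇑g) - 𝒯.T s₀ (⇑g)) p μ + eLpNorm (𝒯.T s₀ (⇑g) - 𝒯.T s₀ f) p μ) :=
        add_le_add le_rfl (eLpNorm_add_le (hTsg.sub hTs0g) (hTs0g.sub hTs0f) hp1)
    _ ≤ m / 3 + (m / 3 + m / 3) := add_le_add h1 (add_le_add hsm h3)
    _ = m := by rw [← add_assoc, ENNReal.add_thirds]
    _ ≤ ε := min_le_right _ _

/-- local mean ergodic theorem.  For `1 ≤ p < ∞` and a strongly continuous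
(in `L¹`) semigroup `𝒯` of Dunford–Schwartz operators, `‖M_t(𝒯)(f) − f‖_p → 0` as `t → 0⁺`
for every `f ∈ Lᵖ(Ω,μ)`, where `M_t(𝒯)(f) = (1/t)∫₀ᵗ T_s(f) ds` (Bochner integral in `Lᵖ`,
realized by the map `A` with `A s = T_s f` in `Lᵖ`). -/
theorem stmt9 {Ω : Type*} [MeasurableSpace Ω] (μ : Measure Ω) [SigmaFinite μ]
    (𝒯 : DSSemigroup μ) (p : ℝ≥0∞) [Fact (1 ≤ p)] (hp : p ≠ ⊤)
    (f : Ω → ℂ) (hf : MemLp f p μ)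
    (A : ℝ → Lp ℂ p μ) (hA : ∀ s : ℝ, 0 ≤ s → ⇑(A s) =ᵐ[μ] 𝒯.T s f) :
    Tendsto (fun t : ℝ => eLpNorm (⇑(t⁻¹ • ∫ s in Set.Ioc (0:ℝ) t, A s : Lp ℂ p μ) - f) p μ)
      (𝓝[Ioi (0:ℝ)] 0) (𝓝 0) := by
  have hp1 : 1 ≤ p := Fact.out
  have hfm : AEStronglyMeasurable f μ := hf.aestronglyMeasurable
  set fLp : Lp ℂ p μ := hf.toLp f with hfLp
  have hT0 : 𝒯.T 0 f = f := by rw [𝒯.map_zero]; rfl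
  -- norms of differences in Lp
  have hnorm : ∀ s, 0 ≤ s → ∀ s', 0 ≤ s' →
      ‖A s - A s'‖ = (eLpNorm (𝒯.T s f - 𝒯.T s' f) p μ).toReal := by
    intro s hs s' hs'
    rw [Lp.norm_def]
    congr 1
    exact eLpNorm_congr_ae ((Lp.coeFn_sub (A s) (A s')).trans ((hA s hs).sub (hA s' hs')))
  have hAf : ∀ s, 0 ≤ s → ‖A s - fLp‖ = (eLpNorm (𝒯.T s f - f) p μ).toReal := by
    intro s hs
    rw [Lp.norm_def]
    congr 1
    exact eLpNorm_congr_ae ((Lp.coeFn_sub (A s) fLp).trans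
      ((hA s hs).sub (hf.coeFn_toLp)))
  -- continuity of A on [0, ∞)
  have hcont : ∀ s₀, 0 ≤ s₀ → Tendsto A (𝓝[Ici 0] s₀) (𝓝 (A s₀)) := by
    intro s₀ hs₀
    rw [tendsto_iff_norm_sub_tendsto_zero]
    have h2 := aux_contLp 𝒯 hp1 hp hf hs₀
    have h3 : Tendsto (fun s => (eLpNorm (𝒯.T s f - 𝒯.T s₀ f) p μ).toReal)
        (𝓝[Ici 0] s₀) (𝓝 0) := by
      exact (ENNReal.tendsto_toReal (a := 0) (by simp)).comp h2
    refine h3.congr' ?_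
    filter_upwards [self_mem_nhdsWithin] with s hs
    exact (hnorm s hs s₀ hs₀).symm
  have hint : ∀ t : ℝ, 0 < t → IntegrableOn A (Ioc 0 t) volume := by
    intro t ht
    have hco : ContinuousOn A (Icc 0 t) := fun s hs =>
      (hcont s hs.1).mono_left (nhdsWithin_mono _ (fun x hx => hx.1))
    exact hco.integrableOn_Icc.mono_set Ioc_subset_Icc_self
  -- key local smallness
  have h0 : Tendsto (fun s => ‖A s - fLp‖) (𝓝[Ici 0] 0) (𝓝 0) := by
    have h2 := aux_contLp 𝒯 hp1 hp hf (le_refl (0:ℝ))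
    rw [hT0] at h2
    have h3 : Tendsto (fun s => (eLpNorm (𝒯.T s f - f) p μ).toReal)
        (𝓝[Ici 0] (0:ℝ)) (𝓝 0) := by
      exact (ENNReal.tendsto_toReal (a := 0) (by simp)).comp h2
    refine h3.congr' ?_
    filter_upwards [self_mem_nhdsWithin] with s hs
    exact (hAf s hs).symm
  have hkey : ∀ ε : ℝ, 0 < ε → ∃ δ > (0:ℝ), ∀ s, 0 ≤ s → s < δ → ‖A s - fLp‖ < ε := by
    intro ε hε
    rw [Metric.tendsto_nhdsWithin_nhds] at h0
    obtain ⟨δ, hδ, H⟩ := h0 ε hε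
    refine ⟨δ, hδ, fun s hs hsδ => ?_⟩
    have := H hs (by rw [Real.dist_eq, sub_zero, abs_of_nonneg hs]; exact hsδ)
    rwa [Real.dist_eq, sub_zero, abs_of_nonneg (norm_nonneg _)] at this
  -- convergence in Lp norm
  have hmain : Tendsto (fun t : ℝ => ‖(t⁻¹ • ∫ s in Set.Ioc (0:ℝ) t, A s : Lp ℂ p μ) - fLp‖)
      (𝓝[Ioi (0:ℝ)] 0) (𝓝 0) := by
    rw [Metric.tendsto_nhdsWithin_nhds]
    intro ε hε
    obtain ⟨δ, hδ, H⟩ := hkey (ε / 2) (by positivity)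
    refine ⟨δ, hδ, fun t (ht : t ∈ Ioi (0:ℝ)) htδ => ?_⟩
    have ht0 : 0 < t := ht
    have htδ' : t < δ := by
      rwa [Real.dist_eq, sub_zero, abs_of_pos ht0] at htδ
    have hvol : volume (Ioc (0:ℝ) t) = ENNReal.ofReal t := by
      rw [Real.volume_Ioc, sub_zero]
    have hconst : ∫ s in Set.Ioc (0:ℝ) t, fLp = t • fLp := by
      rw [setIntegral_const, measureReal_def, hvol, ENNReal.toReal_ofReal ht0.le]
    have hsub : (∫ s in Set.Ioc (0:ℝ) t, (A s - fLp)) =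
        (∫ s in Set.Ioc (0:ℝ) t, A s) - t • fLp := by
      rw [integral_sub (hint t ht0) ((integrableOn_const_iff).mpr (Or.inr (by
        rw [hvol]; exact ENNReal.ofReal_lt_top))), hconst]
    have hb : ‖∫ s in Set.Ioc (0:ℝ) t, (A s - fLp)‖ ≤ (ε / 2) * t := by
      have := norm_setIntegral_le_of_norm_le_const (μ := volume)
        (s := Ioc (0:ℝ) t) (C := ε / 2) (by rw [hvol]; exact ENNReal.ofReal_lt_top)
        (fun s hs => (H s hs.1.le (lt_of_le_of_lt hs.2 htδ')).le)
      · rwa [measureReal_def, hvol, ENNReal.toReal_ofReal ht0.le] at this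
    have hEq : (t⁻¹ • ∫ s in Set.Ioc (0:ℝ) t, A s : Lp ℂ p μ) - fLp =
        t⁻¹ • ∫ s in Set.Ioc (0:ℝ) t, (A s - fLp) := by
      rw [hsub, smul_sub, smul_smul, inv_mul_cancel₀ ht0.ne', one_smul]
    rw [Real.dist_eq, sub_zero, abs_of_nonneg (norm_nonneg _), hEq, norm_smul,
      norm_inv, Real.norm_eq_abs, abs_of_pos ht0]
    calc t⁻¹ * ‖∫ s in Set.Ioc (0:ℝ) t, (A s - fLp)‖ ≤ t⁻¹ * ((ε / 2) * t) := by
          exact mul_le_mul_of_nonneg_left hb (by positivity)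
      _ = ε / 2 := by field_simp
      _ < ε := by linarith
  -- transfer back to eLpNorm
  have hEq2 : ∀ t : ℝ, eLpNorm (⇑(t⁻¹ • ∫ s in Set.Ioc (0:ℝ) t, A s : Lp ℂ p μ) - f) p μ =
      ENNReal.ofReal ‖(t⁻¹ • ∫ s in Set.Ioc (0:ℝ) t, A s : Lp ℂ p μ) - fLp‖ := by
    intro t
    set X : Lp ℂ p μ := t⁻¹ • ∫ s in Set.Ioc (0:ℝ) t, A s with hX
    have h1 : (⇑X - f : Ω → ℂ) =ᵐ[μ] ⇑(X - fLp) :=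
      (EventuallyEq.sub (EventuallyEq.refl _ _) hf.coeFn_toLp.symm).trans
        (Lp.coeFn_sub X fLp).symm
    rw [eLpNorm_congr_ae h1, Lp.norm_def, ENNReal.ofReal_toReal (Lp.eLpNorm_ne_top _)]
  have := (ENNReal.tendsto_ofReal (a := 0) hmain)
  rw [ENNReal.ofReal_zero] at this
  exact this.congr (fun t => (hEq2 t).symm)
end
end

section
/- Let (X,ν) and (Y,μ) be σ-finite measure spaces. If a net {g_t}_{t>0} ⊆ L⁰(X×Y, ν⊗μ) converges almost uniformly to g ∈ L⁰(X×Y, ν⊗μ) as t → ∞ (or as t → 0⁺), then for ν-almost all x ∈ X the net {g_t(x,·)} converges to g(x,·) almost uniformly in (Y,μ) as t → ∞ (respectively, as t → 0⁺). -/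
open MeasureTheory Filter Set Topology
open scoped ENNReal NNReal

noncomputable section

/-- Let `(X,ν)` and `(Y,μ)` be σ-finite measure spaces.  If a net
`{g_t}_{t>0} ⊆ L⁰(X×Y, ν⊗μ)` converges almost uniformly (in Egorov's sense: uniform
convergence off a set of arbitrarily small measure) to `g ∈ L⁰(X×Y, ν⊗μ)` as `t → ∞` or as
`t → 0⁺`, then for `ν`-almost all `x ∈ X` the net `{g_t(x,·)}` converges to `g(x,·)` almost
uniformly in `(Y,μ)` as `t → ∞` (respectively, as `t → 0⁺`). -/
theorem stmt11 {X Y : Type*} [MeasurableSpace X] [MeasurableSpace Y]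
    (ν : Measure X) (μ : Measure Y) [SigmaFinite ν] [SigmaFinite μ]
    (g : ℝ → X × Y → ℂ) (glim : X × Y → ℂ)
    (hg : ∀ t : ℝ, 0 < t → AEMeasurable (g t) (ν.prod μ)) (hglim : AEMeasurable glim (ν.prod μ))
    (l : Filter ℝ) (hl : l = atTop ∨ l = 𝓝[Ioi (0:ℝ)] 0)
    (hconv : ∀ ε : ℝ, 0 < ε → ∃ G : Set (X × Y), MeasurableSet G ∧
      (ν.prod μ) Gᶜ ≤ ENNReal.ofReal ε ∧
      Tendsto (fun t : ℝ => ⨆ z : G, (‖glim z.1 - g t z.1‖₊ : ℝ≥0∞)) l (𝓝 0)) :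
    ∀ᵐ x ∂ν, ∀ ε : ℝ, 0 < ε → ∃ Gx : Set Y, MeasurableSet Gx ∧ μ Gxᶜ ≤ ENNReal.ofReal ε ∧
      Tendsto (fun t : ℝ => ⨆ y : Gx, (‖glim (x, y.1) - g t (x, y.1)‖₊ : ℝ≥0∞)) l (𝓝 0) := by
  -- choose good sets with complements of measure ≤ (1/2)^k * (1/2)^k
  have hpos : ∀ k : ℕ, (0:ℝ) < (1/2:ℝ)^k * (1/2:ℝ)^k := by
    intro k; positivity
  choose G hGmeas hGsmall hGconv using fun k : ℕ => hconv _ (hpos k)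
  -- bad sets in X
  set A : ℕ → Set X :=
    fun k => {x | ENNReal.ofReal ((1/2:ℝ)^k) ≤ μ (Prod.mk x ⁻¹' (G k)ᶜ)} with hA
  have hslice : ∀ k : ℕ, ∫⁻ x, μ (Prod.mk x ⁻¹' (G k)ᶜ) ∂ν = (ν.prod μ) (G k)ᶜ := by
    intro k
    exact (Measure.prod_apply (hGmeas k).compl).symm
  have hAmeas : ∀ k : ℕ, Measurable fun x => μ (Prod.mk x ⁻¹' (G k)ᶜ) := by
    intro k
    exact measurable_measure_prodMk_left (hGmeas k).compl
  have hAsmall : ∀ k : ℕ, ν (A k) ≤ ENNReal.ofReal ((1/2:ℝ)^k) := by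
    intro k
    have h1 : ν (A k) ≤ (∫⁻ x, μ (Prod.mk x ⁻¹' (G k)ᶜ) ∂ν) / ENNReal.ofReal ((1/2:ℝ)^k) :=
      meas_ge_le_lintegral_div (hAmeas k).aemeasurable
        (ENNReal.ofReal_pos.mpr (by positivity)).ne' ENNReal.ofReal_ne_top
    refine h1.trans ?_
    rw [hslice k]
    refine ENNReal.div_le_of_le_mul ?_
    refine (hGsmall k).trans ?_
    rw [ENNReal.ofReal_mul (by positivity)]
  have hsum : (∑' k, ν (A k)) ≠ ∞ := by
    refine ne_top_of_le_ne_top (b := ∑' k : ℕ, (2⁻¹ : ℝ≥0∞)^k) ?_ ?_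
    · rw [ENNReal.tsum_geometric]
      simp
    · refine ENNReal.tsum_le_tsum fun k => (hAsmall k).trans ?_
      rw [show ((2:ℝ≥0∞)⁻¹)^k = ENNReal.ofReal ((1/2:ℝ)^k) by
        rw [ENNReal.ofReal_pow (by norm_num)]
        congr 1
        rw [show (1/2:ℝ) = (2:ℝ)⁻¹ by norm_num, ENNReal.ofReal_inv_of_pos two_pos,
          ENNReal.ofReal_ofNat]]
  filter_upwards [ae_eventually_notMem hsum] with x hx
  intro ε hε
  -- pick k with x ∉ A k and (1/2)^k ≤ ε
  obtain ⟨K, hK⟩ := eventually_atTop.mp hx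
  obtain ⟨m, hm⟩ := exists_pow_lt_of_lt_one hε (by norm_num : (1/2:ℝ) < 1)
  set k := max K m with hk
  have hxk : x ∉ A k := hK k (le_max_left _ _)
  have hek : (1/2:ℝ)^k ≤ ε :=
    le_trans (pow_le_pow_of_le_one (by norm_num) (by norm_num) (le_max_right _ _)) hm.le
  refine ⟨Prod.mk x ⁻¹' (G k), measurable_prodMk_left (hGmeas k), ?_, ?_⟩
  · rw [← preimage_compl]
    simp only [hA, mem_setOf_eq] at hxk
    have := lt_of_not_ge hxk
    exact this.le.trans (ENNReal.ofReal_le_ofReal hek)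
  · refine tendsto_of_tendsto_of_tendsto_of_le_of_le tendsto_const_nhds (hGconv k)
      (fun t => zero_le) ?_
    intro t
    refine iSup_le fun y => ?_
    exact le_iSup_of_le (⟨(x, y.1), y.2⟩ : G k) le_rfl
end
end
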